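/- For L > 1, the state defined by the matrix product expression Σ over all pairs of strings (s, s̄) ∈ {0,1}^L × {0,1}^L of Tr[M^{s_1 s̄_1} ··· M^{s_L s̄_L}] |s⟩⊗|s̄⟩, with M^{00} = (1/2)[[1,1],[1,1]], M^{11} = -2[[0,0],[1,0]], and M^{01} = M^{10} = 0, equals Σ_{f ∈ F_L^{PBC}} (-1)^{|f|} |f⟩⊗|f⟩, where F_L^{PBC} is the set of cyclically blockaded binary strings of length L. -/

import Mathlib

/-- Hamming weight of a binary string. -/
def hammingWt {L : ℕ} (f : Fin L → Bool) : ℕ :=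
  (Finset.univ.filter fun i => f i = true).card

/-- Cyclic (PBC) Rydberg blockade condition. -/
def PBCBlockaded {L : ℕ} (s : Fin L → Bool) : Prop :=
  ∀ i j : Fin L, ((j : ℕ) = (i : ℕ) + 1 ∨ ((i : ℕ) = L - 1 ∧ (j : ℕ) = 0)) →
    ¬(s i = true ∧ s j = true)

/-- The MPS matrices: `M^{00} = (1/2)[[1,1],[1,1]]`, `M^{11} = -2[[0,0],[1,0]]`,
`M^{01} = M^{10} = 0`. -/
noncomputable def Mmat : Bool → Bool → Matrix (Fin 2) (Fin 2) ℝ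
  | false, false => !![1/2, 1/2; 1/2, 1/2]
  | true, true => !![0, 0; -2, 0]
  | _, _ => 0

instance {L : ℕ} (s : Fin L → Bool) : Decidable (PBCBlockaded s) := by
  unfold PBCBlockaded; infer_instance

/-! Each diagonal MPS matrix has rank one, `M^{bb} = |x_b⟩⟨y_b|` (`mpsKet`, `mpsBra`), and the off-diagonal ones
vanish, so only `s = s̄` contributes and the trace collapses to the cyclic product of the transfer
weights `⟨y_{s_i}, x_{s_{i+1}}⟩`. The weight vanishes on two adjacent `1`s, which is the blockade;
on every other pair it factorises as `φ(a) ψ(b)` with `φ(0) ψ(0) = 1` and `φ(1) ψ(1) = -1`, so the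
cyclic product telescopes to `(-1)^{|s|}`. -/

open Matrix

namespace Matrix

variable {R m : Type*} [CommSemiring R] [Fintype m] [DecidableEq m]

theorem prod_ofFn_vecMulVec {n : ℕ} (x y : Fin (n + 1) → m → R) :
    (List.ofFn fun i => vecMulVec (x i) (y i)).prod =
      (∏ i : Fin n, y i.castSucc ⬝ᵥ x i.succ) • vecMulVec (x 0) (y (Fin.last n)) := by
  induction n with
  | zero => simp
  | succ n ih =>
    rw [List.ofFn_succ', List.prod_concat, ih, smul_mul_assoc, vecMulVec_mul_vecMulVec,
      vecMulVec_smul, smul_smul, Fin.prod_univ_castSucc]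
    rfl

theorem trace_prod_ofFn_vecMulVec {L : ℕ} [NeZero L] (x y : Fin L → m → R) :
    trace (List.ofFn fun i => vecMulVec (x i) (y i)).prod = ∏ i, y i ⬝ᵥ x (i + 1) := by
  obtain ⟨n, rfl⟩ : ∃ n, L = n + 1 := Nat.exists_eq_succ_of_ne_zero (NeZero.ne L)
  rw [prod_ofFn_vecMulVec, trace_smul, trace_vecMulVec, smul_eq_mul,
    Fin.prod_univ_castSucc (fun i => y i ⬝ᵥ x (i + 1)), Fin.last_add_one, dotProduct_comm]
  simp only [Fin.coeSucc_eq_succ]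

end Matrix

theorem Fin.prod_mul_succ_eq_prod_mul {M : Type*} [CommMonoid M] {L : ℕ} [NeZero L]
    (f g : Fin L → M) : ∏ i, f i * g (i + 1) = ∏ i, f i * g i := by
  rw [Finset.prod_mul_distrib, Finset.prod_mul_distrib]
  exact congrArg _ (Equiv.prod_comp (Equiv.addRight 1) g)

theorem Fin.val_succ_or_wrap_iff_eq_add_one {L : ℕ} [NeZero L] (i j : Fin L) :
    ((j : ℕ) = i + 1 ∨ (i : ℕ) = L - 1 ∧ (j : ℕ) = 0) ↔ j = i + 1 := by
  obtain ⟨n, rfl⟩ : ∃ n, L = n + 1 := Nat.exists_eq_succ_of_ne_zero (NeZero.ne L)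
  rw [Fin.ext_iff, Fin.val_add_one]
  split_ifs with h <;> simp [Fin.ext_iff] at h <;> omega

theorem pbcBlockaded_iff {L : ℕ} [NeZero L] (s : Fin L → Bool) :
    PBCBlockaded s ↔ ∀ i, ¬(s i = true ∧ s (i + 1) = true) := by
  simp only [PBCBlockaded, Fin.val_succ_or_wrap_iff_eq_add_one, forall_eq]

theorem neg_one_pow_hammingWt {L : ℕ} (s : Fin L → Bool) :
    (-1 : ℝ) ^ hammingWt s = ∏ i, if s i then -1 else 1 := by
  rw [Finset.prod_ite, Finset.prod_const, Finset.prod_const, one_pow, mul_one, hammingWt]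

def mpsKet : Bool → Fin 2 → ℝ
  | false => ![1, 1]
  | true => ![0, 1]

noncomputable def mpsBra : Bool → Fin 2 → ℝ
  | false => ![1 / 2, 1 / 2]
  | true => ![-2, 0]

theorem Mmat_self_eq_vecMulVec (b : Bool) : Mmat b b = vecMulVec (mpsKet b) (mpsBra b) := by
  ext i j
  cases b <;> fin_cases i <;> fin_cases j <;> simp [Mmat, mpsKet, mpsBra, vecMulVec_apply]

theorem Mmat_eq_zero_of_ne {a b : Bool} (h : a ≠ b) : Mmat a b = 0 := by
  cases a <;> cases b <;> simp_all [Mmat]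

theorem mpsBra_dotProduct_mpsKet {a b : Bool} (h : ¬(a = true ∧ b = true)) :
    mpsBra a ⬝ᵥ mpsKet b = (if a then -2 else 1) * (if b then 1 / 2 else 1) := by
  cases a <;> cases b <;> norm_num [mpsBra, mpsKet, dotProduct, Fin.sum_univ_two] at *

theorem trace_prod_Mmat_self {L : ℕ} [NeZero L] (s : Fin L → Bool) :
    trace (List.ofFn fun i => Mmat (s i) (s i)).prod =
      if PBCBlockaded s then (-1 : ℝ) ^ hammingWt s else 0 := by
  simp only [Mmat_self_eq_vecMulVec, trace_prod_ofFn_vecMulVec]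
  split_ifs with hs
  · rw [pbcBlockaded_iff] at hs
    rw [neg_one_pow_hammingWt, Finset.prod_congr rfl fun i _ => mpsBra_dotProduct_mpsKet (hs i),
      Fin.prod_mul_succ_eq_prod_mul (fun i => if s i then (-2 : ℝ) else 1)
        (fun i => if s i then 1 / 2 else 1)]
    refine Finset.prod_congr rfl fun i _ => ?_
    cases s i <;> norm_num
  · simp only [pbcBlockaded_iff, not_forall, not_not] at hs
    obtain ⟨i, hi, hi'⟩ := hs
    exact Finset.prod_eq_zero (Finset.mem_univ i) (by simp [hi, hi', mpsBra, mpsKet])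

/-- For `L > 1`, the MPS coefficients `Tr[M^{s_1 t_1} ⋯ M^{s_L t_L}]` equal the coefficients
of `Σ_{f ∈ F_L^{PBC}} (-1)^{|f|} |f⟩⊗|f⟩`. -/
theorem stmt16 (L : ℕ) (hL : 1 < L) :
    (fun p : (Fin L → Bool) × (Fin L → Bool) =>
        Matrix.trace ((List.ofFn fun i => Mmat (p.1 i) (p.2 i)).prod)) =
      (fun p : (Fin L → Bool) × (Fin L → Bool) =>
        if p.1 = p.2 ∧ PBCBlockaded p.1 then (-1 : ℝ) ^ hammingWt p.1 else 0) := by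
  have : NeZero L := ⟨by omega⟩
  funext ⟨s, t⟩
  by_cases hst : s = t
  · subst hst
    simpa using trace_prod_Mmat_self s
  · obtain ⟨i, hi⟩ := Function.ne_iff.1 hst
    rw [if_neg fun h => hst h.1,
      List.prod_eq_zero (List.mem_ofFn.2 ⟨i, Mmat_eq_zero_of_ne hi⟩), trace_zero]
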